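/- The zeta function ξ^{G₂/P_long} of (G₂, P_long) over ℚ satisfies the standard functional equation: for every complex number s such that neither s nor 1−s lies in the exceptional set S₁ = {−1, 0, 1/3, 1/2, 2/3, 1, 2}, one has ξ^{G₂/P_long}(1−s) = ξ^{G₂/P_long}(s). -/
import Mathlib


open Complex

noncomputable def xiG2Plong (s : ℂ) : ℂ :=
  completedRiemannZeta 2 * completedRiemannZeta (s + 1) * completedRiemannZeta (2 * s) *
      completedRiemannZeta (3 * s) / (s - 2)
  - completedRiemannZeta 2 * completedRiemannZeta (s - 1) * completedRiemannZeta (2 * s - 1) *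
      completedRiemannZeta (3 * s - 2) / (s + 1)
  - completedRiemannZeta (s + 1) * completedRiemannZeta (2 * s) * completedRiemannZeta (3 * s) /
      (2 * s - 2)
  + completedRiemannZeta (s - 1) * completedRiemannZeta (2 * s - 1) *
      completedRiemannZeta (3 * s - 2) / (2 * s)
  - completedRiemannZeta s * completedRiemannZeta (2 * s) * completedRiemannZeta (3 * s - 1) /
      (3 * s * (2 * s - 2))
  - completedRiemannZeta s * completedRiemannZeta (2 * s - 1) * completedRiemannZeta (3 * s - 2) /
      ((3 * s - 1) * (s - 2))
  - completedRiemannZeta s * completedRiemannZeta (2 * s - 1) * completedRiemannZeta (3 * s - 1) /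
      ((3 * s - 3) * (2 * s))
  - completedRiemannZeta s * completedRiemannZeta (2 * s) * completedRiemannZeta (3 * s) /
      ((3 * s - 2) * (s + 1))

def S1 : Set ℂ := {-1, 0, 1/3, 1/2, 2/3, 1, 2}

theorem xiG2Plong_functional_equation (s : ℂ) (hs : s ∉ S1) (hs' : (1 - s) ∉ S1) :
    xiG2Plong (1 - s) = xiG2Plong s := by
  unfold xiG2Plong
  have e : ∀ a b : ℂ, a = 1 - b → completedRiemannZeta a = completedRiemannZeta b := by
    rintro a b rfl; exact completedRiemannZeta_one_sub b
  rw [e ((1-s)+1) (s-1) (by ring), e (2*(1-s)) (2*s-1) (by ring),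
    e (3*(1-s)) (3*s-2) (by ring), e ((1-s)-1) (s+1) (by ring),
    e (2*(1-s)-1) (2*s) (by ring), e (3*(1-s)-2) (3*s) (by ring),
    e (3*(1-s)-1) (3*s-1) (by ring), e (1-s) s rfl]
  rw [show 3*(1-s)*(2*(1-s)-2) = (3*s-3)*(2*s) by ring,
    show (3*(1-s)-1)*(1-s-2) = (3*s-2)*(s+1) by ring,
    show (3*(1-s)-3)*(2*(1-s)) = 3*s*(2*s-2) by ring,
    show (3*(1-s)-2)*(1-s+1) = (3*s-1)*(s-2) by ring,
    show (1-s-2 : ℂ) = -(s+1) by ring,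
    show (1-s+1 : ℂ) = -(s-2) by ring,
    show (2*(1-s)-2 : ℂ) = -(2*s) by ring,
    show (2*(1-s) : ℂ) = -(2*s-2) by ring]
  simp only [div_neg]
  ring
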